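/- arXiv:1907.09843 — 9 statements merged into one kernel-verified Lean document; each statement's English description precedes it below -/
import Mathlib

section
/- For f, g in C(X)/ℝ𝟙 with X a compact Hausdorff space and norm ‖[f]‖ = max f − min f, the equality ‖f + g‖ = ‖f‖ + ‖g‖ holds if and only if argmin(f) ∩ argmin(g) ≠ ∅ and argmax(f) ∩ argmax(g) ≠ ∅. -/
open scoped BigOperators

noncomputable def oscNorm {X : Type*} [TopologicalSpace X] [CompactSpace X] [Nonempty X]
    (f : C(X, ℝ)) : ℝ :=
  (⨆ x, f x) - ⨅ x, f x

private lemma exists_max {X : Type*} [TopologicalSpace X] [CompactSpace X] [Nonempty X]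
    (f : C(X, ℝ)) : ∃ a, ∀ y, f y ≤ f a := by
  obtain ⟨a, -, ha⟩ := isCompact_univ.exists_isMaxOn Set.univ_nonempty f.continuous.continuousOn
  exact ⟨a, fun y => ha (Set.mem_univ y)⟩

private lemma exists_min {X : Type*} [TopologicalSpace X] [CompactSpace X] [Nonempty X]
    (f : C(X, ℝ)) : ∃ a, ∀ y, f a ≤ f y := by
  obtain ⟨a, -, ha⟩ := isCompact_univ.exists_isMinOn Set.univ_nonempty f.continuous.continuousOn
  exact ⟨a, fun y => ha (Set.mem_univ y)⟩

private lemma iSup_eq_of_max {X : Type*} [TopologicalSpace X] [CompactSpace X] [Nonempty X]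
    (f : C(X, ℝ)) {a : X} (ha : ∀ y, f y ≤ f a) : (⨆ x, f x) = f a :=
  le_antisymm (ciSup_le ha) (le_ciSup ⟨f a, by rintro z ⟨y, rfl⟩; exact ha y⟩ a)

private lemma iInf_eq_of_min {X : Type*} [TopologicalSpace X] [CompactSpace X] [Nonempty X]
    (f : C(X, ℝ)) {a : X} (ha : ∀ y, f a ≤ f y) : (⨅ x, f x) = f a :=
  le_antisymm (ciInf_le ⟨f a, by rintro z ⟨y, rfl⟩; exact ha y⟩ a) (le_ciInf ha)

/-- For `f, g ∈ C(X)/ℝ𝟙` with the norm `‖[f]‖ = max f − min f`, additivity of the norm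
`‖f + g‖ = ‖f‖ + ‖g‖` holds iff `argmin f ∩ argmin g ≠ ∅` and `argmax f ∩ argmax g ≠ ∅`. -/
theorem oscNorm_add_eq_iff_common_argmin_argmax
    {X : Type*} [TopologicalSpace X] [CompactSpace X] [T2Space X] [Nonempty X]
    (f g : C(X, ℝ)) :
    oscNorm (f + g) = oscNorm f + oscNorm g ↔
      ((∃ x, (∀ y, f x ≤ f y) ∧ ∀ y, g x ≤ g y) ∧
       (∃ x, (∀ y, f y ≤ f x) ∧ ∀ y, g y ≤ g x)) := by
  obtain ⟨a, ha⟩ := exists_max f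
  obtain ⟨b, hb⟩ := exists_min f
  obtain ⟨c, hc⟩ := exists_max g
  obtain ⟨d, hd⟩ := exists_min g
  obtain ⟨p, hp⟩ := exists_max (f + g)
  obtain ⟨q, hq⟩ := exists_min (f + g)
  have hfg : ∀ y : X, (f + g) y = f y + g y := fun y => rfl
  have e1 : oscNorm f = f a - f b := by rw [oscNorm, iSup_eq_of_max f ha, iInf_eq_of_min f hb]
  have e2 : oscNorm g = g c - g d := by rw [oscNorm, iSup_eq_of_max g hc, iInf_eq_of_min g hd]
  have e3 : oscNorm (f + g) = (f p + g p) - (f q + g q) := by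
    rw [oscNorm, iSup_eq_of_max (f + g) hp, iInf_eq_of_min (f + g) hq, hfg, hfg]
  constructor
  · intro h
    rw [e1, e2, e3] at h
    have hsup : f p + g p ≤ f a + g c := add_le_add (ha p) (hc p)
    have hinf : f b + g d ≤ f q + g q := add_le_add (hb q) (hd q)
    have h1 : f p + g p = f a + g c := by linarith
    have h2 : f q + g q = f b + g d := by linarith
    have hfp : f p = f a := by have := hc p; have := ha p; linarith
    have hgp : g p = g c := by have := hc p; have := ha p; linarith
    have hfq : f q = f b := by have := hd q; have := hb q; linarith
    have hgq : g q = g d := by have := hd q; have := hb q; linarith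
    refine ⟨⟨q, fun y => ?_, fun y => ?_⟩, ⟨p, fun y => ?_, fun y => ?_⟩⟩
    · rw [hfq]; exact hb y
    · rw [hgq]; exact hd y
    · rw [hfp]; exact ha y
    · rw [hgp]; exact hc y
  · rintro ⟨⟨u, hu1, hu2⟩, ⟨v, hv1, hv2⟩⟩
    rw [e1, e2, e3]
    have h1 : f p + g p = f v + g v :=
      le_antisymm (add_le_add (hv1 p) (hv2 p)) (by have := hp v; rw [hfg, hfg] at this; linarith)
    have h2 : f q + g q = f u + g u :=
      le_antisymm (by have := hq u; rw [hfg, hfg] at this; linarith)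
        (add_le_add (hu1 q) (hu2 q))
    have : f v = f a := le_antisymm (ha v) (hv1 a)
    have : g v = g c := le_antisymm (hc v) (hv2 c)
    have : f u = f b := le_antisymm (hu1 b) (hb u)
    have : g u = g d := le_antisymm (hu2 d) (hd u)
    have hfv : f v = f a := le_antisymm (ha v) (hv1 a)
    have hgv : g v = g c := le_antisymm (hc v) (hv2 c)
    have hfu : f u = f b := le_antisymm (hu1 b) (hb u)
    have hgu : g u = g d := le_antisymm (hu2 d) (hd u)
    linarith
end

section
/- Let V be a finite-dimensional real inner product space and E ⊆ V a compact set that affinely generates V. Then the function ‖x‖_E := max_{y∈E} ⟨x,y⟩ − min_{y∈E} ⟨x,y⟩ is a norm on V. -/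
open scoped RealInnerProductSpace Pointwise

/-- The generalized Hofer norm associated to a compact set `E`:
`‖x‖_E = max_{y ∈ E} ⟪x, y⟫ - min_{y ∈ E} ⟪x, y⟫`. -/
noncomputable def hoferNorm {V : Type*} [NormedAddCommGroup V] [InnerProductSpace ℝ V]
    (E : Set V) (x : V) : ℝ :=
  sSup ((fun y => ⟪x, y⟫) '' E) - sInf ((fun y => ⟪x, y⟫) '' E)

/-- If `E` is a compact subset of a finite-dimensional real inner product space which is full
(i.e. affinely generates the space), then `‖·‖_E` is a norm: it is nonnegative, vanishes exactly
at `0`, is absolutely homogeneous, and satisfies the triangle inequality. -/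
theorem hoferNorm_is_norm
    {V : Type*} [NormedAddCommGroup V] [InnerProductSpace ℝ V] [FiniteDimensional ℝ V]
    (E : Set V) (hE : IsCompact E) (hfull : affineSpan ℝ E = ⊤) :
    (∀ x, 0 ≤ hoferNorm E x) ∧
    (∀ x, hoferNorm E x = 0 ↔ x = 0) ∧
    (∀ (c : ℝ) (x : V), hoferNorm E (c • x) = |c| * hoferNorm E x) ∧
    (∀ x y, hoferNorm E (x + y) ≤ hoferNorm E x + hoferNorm E y) := by
  -- E is nonempty
  have hne : E.Nonempty := by
    by_contra h
    rw [Set.not_nonempty_iff_eq_empty] at h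
    rw [h] at hfull
    simp [AffineSubspace.ext_iff] at hfull
  -- images are compact, hence bounded
  have hcont : ∀ x : V, Continuous fun y : V => ⟪x, y⟫ := fun x =>
    (innerSL ℝ x).continuous
  have himg : ∀ x : V, IsCompact ((fun y => ⟪x, y⟫) '' E) := fun x =>
    hE.image (hcont x)
  have hbdA : ∀ x : V, BddAbove ((fun y => ⟪x, y⟫) '' E) := fun x => (himg x).bddAbove
  have hbdB : ∀ x : V, BddBelow ((fun y => ⟪x, y⟫) '' E) := fun x => (himg x).bddBelow
  have hnei : ∀ x : V, ((fun y => ⟪x, y⟫) '' E).Nonempty := fun x => hne.image _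
  have h1 : ∀ x, 0 ≤ hoferNorm E x := by
    intro x
    obtain ⟨y, hy⟩ := hne
    have h1 : sInf ((fun y => ⟪x, y⟫) '' E) ≤ ⟪x, y⟫ :=
      csInf_le (hbdB x) ⟨y, hy, rfl⟩
    have h2 : ⟪x, y⟫ ≤ sSup ((fun y => ⟪x, y⟫) '' E) :=
      le_csSup (hbdA x) ⟨y, hy, rfl⟩
    simp only [hoferNorm]; linarith
  refine ⟨h1, ?_, ?_, ?_⟩
  · intro x
    constructor
    · intro h0
      -- all inner products are equal on E
      have hconst : ∀ y ∈ E, ⟪x, y⟫ = sSup ((fun y => ⟪x, y⟫) '' E) := by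
        intro y hy
        have h1 : sInf ((fun y => ⟪x, y⟫) '' E) ≤ ⟪x, y⟫ :=
          csInf_le (hbdB x) ⟨y, hy, rfl⟩
        have h2 : ⟪x, y⟫ ≤ sSup ((fun y => ⟪x, y⟫) '' E) :=
          le_csSup (hbdA x) ⟨y, hy, rfl⟩
        have : sSup ((fun y => ⟪x, y⟫) '' E) = sInf ((fun y => ⟪x, y⟫) '' E) := by
          simp only [hoferNorm] at h0; linarith
        linarith
      -- so x is orthogonal to vectorSpan of E, which is ⊤
      have hvs : vectorSpan ℝ E = ⊤ := by
        have := congrArg AffineSubspace.direction hfull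
        rwa [direction_affineSpan, AffineSubspace.direction_top] at this
      have hx : x ∈ vectorSpan ℝ E := hvs ▸ Submodule.mem_top
      rw [vectorSpan_def] at hx
      have hzero : ∀ v ∈ Submodule.span ℝ (E -ᵥ E), ⟪x, v⟫ = 0 := by
        intro v hv
        induction hv using Submodule.span_induction with
        | mem v hv =>
          obtain ⟨a, ha, b, hb, rfl⟩ := hv
          simp only [vsub_eq_sub, inner_sub_right, hconst a ha, hconst b hb, sub_self]
        | zero => simp
        | add u v _ _ hu hv => rw [inner_add_right, hu, hv, add_zero]
        | smul c v _ hv => rw [inner_smul_right, hv, mul_zero]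
      have : ⟪x, x⟫ = 0 := hzero x hx
      exact inner_self_eq_zero.mp this
    · rintro rfl
      simp only [hoferNorm]
      have : (fun y : V => ⟪(0 : V), y⟫) '' E = (fun _ : V => (0 : ℝ)) '' E := by
        funext y; simp
      rw [this]
      obtain ⟨y, hy⟩ := hne
      have : (fun _ : V => (0 : ℝ)) '' E = {0} := by
        apply Set.eq_singleton_iff_nonempty_unique_mem.mpr
        exact ⟨⟨0, y, hy, rfl⟩, by rintro z ⟨w, _, rfl⟩; rfl⟩
      rw [this]; simp
  · intro c x
    have himg : (fun y => ⟪c • x, y⟫) '' E = c • ((fun y => ⟪x, y⟫) '' E) := by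
      rw [← Set.image_smul, Set.image_image]
      funext y
      simp [real_inner_smul_left, smul_eq_mul]
    simp only [hoferNorm, himg]
    rcases le_or_gt 0 c with hc | hc
    · rw [Real.sSup_smul_of_nonneg hc, Real.sInf_smul_of_nonneg hc, abs_of_nonneg hc]
      simp [smul_eq_mul, mul_sub]
    · rw [Real.sSup_smul_of_nonpos hc.le, Real.sInf_smul_of_nonpos hc.le,
        abs_of_neg hc]
      simp [smul_eq_mul]; ring
  · intro x y
    have hsup : sSup ((fun z => ⟪x + y, z⟫) '' E) ≤
        sSup ((fun z => ⟪x, z⟫) '' E) + sSup ((fun z => ⟪y, z⟫) '' E) := by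
      apply csSup_le (hnei _)
      rintro _ ⟨z, hz, rfl⟩
      simp only [inner_add_left]
      exact add_le_add (le_csSup (hbdA x) ⟨z, hz, rfl⟩) (le_csSup (hbdA y) ⟨z, hz, rfl⟩)
    have hinf : sInf ((fun z => ⟪x, z⟫) '' E) + sInf ((fun z => ⟪y, z⟫) '' E) ≤
        sInf ((fun z => ⟪x + y, z⟫) '' E) := by
      apply le_csInf (hnei _)
      rintro _ ⟨z, hz, rfl⟩
      simp only [inner_add_left]
      exact add_le_add (csInf_le (hbdB x) ⟨z, hz, rfl⟩) (csInf_le (hbdB y) ⟨z, hz, rfl⟩)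
    simp only [hoferNorm]; linarith
end

section
/- Let V be a finite-dimensional real inner product space, E ⊆ V compact and full, and ‖·‖_E the generalized Hofer norm ‖x‖_E = max_{y∈E}⟨x,y⟩ − min_{y∈E}⟨x,y⟩. A linear functional φ is a norming functional of a nonzero x ∈ V if and only if φ = ⟨y⁺ − y⁻, ·⟩ for some y⁺ ∈ conv(argmax_E ⟨x,·⟩) and y⁻ ∈ conv(argmin_E ⟨x,·⟩). -/
open scoped RealInnerProductSpace
open scoped Pointwise

/-- The convex hull of a compact set in a finite-dimensional normed space is compact. -/
lemma isCompact_convexHull_aux {V : Type*} [NormedAddCommGroup V] [NormedSpace ℝ V]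
    [FiniteDimensional ℝ V] {s : Set V} (hs : IsCompact s) :
    IsCompact (convexHull ℝ s) := by
  classical
  rcases s.eq_empty_or_nonempty with rfl | ⟨s₀, hs₀⟩
  · simp only [convexHull_empty]; exact isCompact_empty
  set n := Module.finrank ℝ V + 1 with hn
  have key : convexHull ℝ s =
      (fun p : (Fin n → ℝ) × (Fin n → V) => ∑ i, p.1 i • p.2 i) ''
        (stdSimplex ℝ (Fin n) ×ˢ Set.univ.pi fun _ => s) := by
    apply Set.Subset.antisymm
    · intro u hu
      obtain ⟨ι, _, z, w, hzs, hai, hw0, hw1, hsum⟩ :=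
        eq_pos_convex_span_of_mem_convexHull hu
      have hcard : Fintype.card ι ≤ n := by
        refine hai.card_le_finrank_succ.trans ?_
        exact Nat.add_le_add_right (Submodule.finrank_le _) 1
      obtain ⟨g⟩ := Function.Embedding.nonempty_of_card_le
        (β := Fin n) (by simpa using hcard)
      let W : Fin n → ℝ := fun i => if h : ∃ j, g j = i then w h.choose else 0
      let Z : Fin n → V := fun i => if h : ∃ j, g j = i then z h.choose else s₀
      have hWg : ∀ j, W (g j) = w j := by
        intro j
        have h : ∃ j', g j' = g j := ⟨j, rfl⟩
        show (if h : ∃ j', g j' = g j then w h.choose else 0) = w j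
        rw [dif_pos h, g.injective h.choose_spec]
      have hZg : ∀ j, Z (g j) = z j := by
        intro j
        have h : ∃ j', g j' = g j := ⟨j, rfl⟩
        show (if h : ∃ j', g j' = g j then z h.choose else s₀) = z j
        rw [dif_pos h, g.injective h.choose_spec]
      have hsub : Finset.univ.map g ⊆ Finset.univ := Finset.subset_univ _
      have hzero : ∀ i ∈ Finset.univ, i ∉ Finset.univ.map g → W i = 0 := by
        intro i _ hi
        have hne : ¬ ∃ j, g j = i := by
          rintro ⟨j, hj⟩; exact hi (Finset.mem_map.2 ⟨j, Finset.mem_univ _, hj⟩)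
        show (if h : ∃ j, g j = i then w h.choose else 0) = 0
        rw [dif_neg hne]
      have hzero' : ∀ i ∈ Finset.univ, i ∉ Finset.univ.map g → W i • Z i = 0 := by
        intro i hi h2; rw [hzero i hi h2, zero_smul]
      refine ⟨⟨W, Z⟩, ⟨⟨fun i => ?_, ?_⟩, fun i _ => ?_⟩, ?_⟩
      · by_cases h : ∃ j, g j = i
        · show 0 ≤ (if h : ∃ j, g j = i then w h.choose else 0)
          rw [dif_pos h]; exact (hw0 _).le
        · show 0 ≤ (if h : ∃ j, g j = i then w h.choose else 0)
          rw [dif_neg h]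
      · rw [← Finset.sum_subset hsub hzero, Finset.sum_map]
        rw [← hw1]
        exact Finset.sum_congr rfl fun j _ => hWg j
      · by_cases h : ∃ j, g j = i
        · show (if h : ∃ j, g j = i then z h.choose else s₀) ∈ s
          rw [dif_pos h]; exact hzs ⟨_, rfl⟩
        · show (if h : ∃ j, g j = i then z h.choose else s₀) ∈ s
          rw [dif_neg h]; exact hs₀
      · show ∑ i, W i • Z i = u
        rw [← Finset.sum_subset hsub hzero', Finset.sum_map]
        rw [← hsum]
        exact Finset.sum_congr rfl fun j _ => by rw [hWg, hZg]
    · rintro _ ⟨⟨w, z⟩, ⟨hw, hz⟩, rfl⟩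
      show ∑ i, w i • z i ∈ convexHull ℝ s
      have h1 : ∑ i, w i = 1 := hw.2
      have hcm : (∑ i, w i • z i) = Finset.univ.centerMass w z :=
        (Finset.centerMass_eq_of_sum_1 _ _ h1).symm
      rw [hcm]
      exact Finset.centerMass_mem_convexHull _ (fun i _ => hw.1 i)
        (by rw [h1]; norm_num) (fun i _ => hz i (Set.mem_univ i))
  rw [key]
  refine (((isCompact_stdSimplex ℝ _).prod (isCompact_univ_pi fun _ => hs)).image ?_)
  exact continuous_finset_sum _ fun i _ =>
    ((continuous_apply i).comp continuous_fst).smul ((continuous_apply i).comp continuous_snd)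

/-- Norming functionals for the generalized Hofer norm: a linear functional `φ` is a norming
functional of a nonzero `x` (i.e. `φ ≤ ‖·‖_E` pointwise, so `φ` has dual norm `1`, and
`φ x = ‖x‖_E`) iff `φ = ⟪y⁺ - y⁻, ·⟫` with `y⁺ ∈ conv (argmax_E ⟪x,·⟫)` and
`y⁻ ∈ conv (argmin_E ⟪x,·⟫)`. -/
theorem hofer_norming_functional_iff
    {V : Type*} [NormedAddCommGroup V] [InnerProductSpace ℝ V] [FiniteDimensional ℝ V]
    (E : Set V) (hE : IsCompact E) (hfull : affineSpan ℝ E = ⊤)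
    (x : V) (hx : x ≠ 0) (φ : V →ₗ[ℝ] ℝ) :
    ((∀ v, φ v ≤ hoferNorm E v) ∧ φ x = hoferNorm E x) ↔
      ∃ yp ∈ convexHull ℝ {y ∈ E | ∀ z ∈ E, ⟪x, z⟫ ≤ ⟪x, y⟫},
        ∃ ym ∈ convexHull ℝ {y ∈ E | ∀ z ∈ E, ⟪x, y⟫ ≤ ⟪x, z⟫},
          ∀ v, φ v = ⟪yp - ym, v⟫ := by
  classical
  -- E is nonempty
  have hEne : E.Nonempty := by
    refine (affineSpan_nonempty (k := ℝ)).1 ?_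
    rw [hfull]
    exact ⟨0, trivial⟩
  have hcont : ∀ v : V, Continuous fun y : V => ⟪v, y⟫ := fun v =>
    continuous_const.inner continuous_id
  have hlin : ∀ v : V, IsLinearMap ℝ fun y : V => ⟪v, y⟫ := fun v =>
    ⟨fun a b => inner_add_right v a b, fun c a => by
      simp [real_inner_smul_right, smul_eq_mul]⟩
  have hsup : ∀ v : V, ∀ y ∈ E, ⟪v, y⟫ ≤ sSup ((fun y => ⟪v, y⟫) '' E) := fun v y hy =>
    le_csSup (hE.image (hcont v)).bddAbove ⟨y, hy, rfl⟩
  have hinf : ∀ v : V, ∀ y ∈ E, sInf ((fun y => ⟪v, y⟫) '' E) ≤ ⟪v, y⟫ := fun v y hy =>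
    csInf_le (hE.image (hcont v)).bddBelow ⟨y, hy, rfl⟩
  have hattainSup : ∀ v : V, ∃ y ∈ E, sSup ((fun y => ⟪v, y⟫) '' E) = ⟪v, y⟫ := by
    intro v
    obtain ⟨y, hyE, hy⟩ := hE.exists_isMaxOn hEne (hcont v).continuousOn
    refine ⟨y, hyE, le_antisymm (csSup_le (hEne.image _) ?_) (hsup v y hyE)⟩
    rintro _ ⟨z, hz, rfl⟩; exact hy hz
  have hattainInf : ∀ v : V, ∃ y ∈ E, sInf ((fun y => ⟪v, y⟫) '' E) = ⟪v, y⟫ := by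
    intro v
    obtain ⟨y, hyE, hy⟩ := hE.exists_isMinOn hEne (hcont v).continuousOn
    refine ⟨y, hyE, le_antisymm (hinf v y hyE) (le_csInf (hEne.image _) ?_)⟩
    rintro _ ⟨z, hz, rfl⟩; exact hy hz
  set M := sSup ((fun y => ⟪x, y⟫) '' E) with hM
  set m := sInf ((fun y => ⟪x, y⟫) '' E) with hm
  set Amax := {y ∈ E | ∀ z ∈ E, ⟪x, z⟫ ≤ ⟪x, y⟫} with hAmaxDef
  set Amin := {y ∈ E | ∀ z ∈ E, ⟪x, y⟫ ≤ ⟪x, z⟫} with hAminDef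
  have hAmaxVal : ∀ y ∈ Amax, ⟪x, y⟫ = M := by
    intro y hy
    refine le_antisymm (hsup x y hy.1) (csSup_le (hEne.image _) ?_)
    rintro _ ⟨z, hz, rfl⟩; exact hy.2 z hz
  have hAminVal : ∀ y ∈ Amin, ⟪x, y⟫ = m := by
    intro y hy
    refine le_antisymm (le_csInf (hEne.image _) ?_) (hinf x y hy.1)
    rintro _ ⟨z, hz, rfl⟩; exact hy.2 z hz
  have hHofer : ∀ v, hoferNorm E v =
      sSup ((fun y => ⟪v, y⟫) '' E) - sInf ((fun y => ⟪v, y⟫) '' E) := fun v => rfl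
  constructor
  · rintro ⟨hle, heq⟩
    -- Riesz representation of φ
    set φ' : V →L[ℝ] ℝ := LinearMap.toContinuousLinearMap φ with hφ'
    set w : V := (InnerProductSpace.toDual ℝ V).symm φ' with hwdef
    have hw : ∀ v, ⟪w, v⟫ = φ v := fun v => InnerProductSpace.toDual_symm_apply
    -- the compact convex set K = conv (E - E)
    have hEE : IsCompact (E - E) := by
      have himg : E - E = (fun p : V × V => p.1 - p.2) '' (E ×ˢ E) := by
        ext u
        simp only [Set.mem_sub, Set.mem_image, Set.mem_prod, Prod.exists]
        constructor
        · rintro ⟨a, ha, b, hb, h⟩; exact ⟨a, b, ⟨ha, hb⟩, h⟩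
        · rintro ⟨a, b, ⟨ha, hb⟩, h⟩; exact ⟨a, ha, b, hb, h⟩
      rw [himg]
      exact (hE.prod hE).image (continuous_fst.sub continuous_snd)
    set K := convexHull ℝ (E - E) with hK
    have hKcomp : IsCompact K := isCompact_convexHull_aux hEE
    have hKconv : Convex ℝ K := convex_convexHull ℝ _
    have hsubK : E - E ⊆ K := subset_convexHull ℝ _
    -- w belongs to K, by separation
    have hwK : w ∈ K := by
      by_contra hcon
      obtain ⟨f, u, hfw, hfK⟩ :=
        geometric_hahn_banach_point_closed hKconv hKcomp.isClosed hcon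
      set v : V := (InnerProductSpace.toDual ℝ V).symm (-f) with hv
      have hvb : ∀ b, ⟪v, b⟫ = -(f b) := fun b => by
        rw [hv, InnerProductSpace.toDual_symm_apply]; rfl
      obtain ⟨y1, hy1E, hy1⟩ := hattainSup v
      obtain ⟨z1, hz1E, hz1⟩ := hattainInf v
      have hmemK : y1 - z1 ∈ K := hsubK (Set.sub_mem_sub hy1E hz1E)
      have h2 : u < f (y1 - z1) := hfK _ hmemK
      have h3 : φ v ≤ hoferNorm E v := hle v
      rw [hHofer v, hy1, hz1] at h3
      have e1 : ⟪v, y1 - z1⟫ = ⟪v, y1⟫ - ⟪v, z1⟫ := inner_sub_right v y1 z1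
      have e2 : ⟪v, y1 - z1⟫ = -(f (y1 - z1)) := hvb _
      have e3 : ⟪v, w⟫ = -(f w) := hvb w
      have e4 : ⟪v, w⟫ = ⟪w, v⟫ := real_inner_comm w v
      have e5 : ⟪w, v⟫ = φ v := hw v
      linarith
    -- maximality of ⟪x, w⟫ over K
    have hxw : ⟪x, w⟫ = M - m := by
      have h1 : ⟪x, w⟫ = ⟪w, x⟫ := real_inner_comm w x
      rw [h1, hw x, heq, hHofer x]
    have hKbound : ∀ u ∈ K, ⟪x, u⟫ ≤ M - m := by
      intro u hu
      have : u ∈ {u : V | ⟪x, u⟫ ≤ M - m} := by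
        refine convexHull_min ?_ (convex_halfSpace_le (hlin x) _) hu
        intro p hp
        obtain ⟨a, haE, b, hbE, rfl⟩ := Set.mem_sub.1 hp
        have h1 := hsup x a haE
        have h2 := hinf x b hbE
        show ⟪x, a - b⟫ ≤ M - m
        rw [inner_sub_right]
        linarith
      exact this
    -- extract a convex combination
    rw [hK, convexHull_eq] at hwK
    obtain ⟨ι, t, ws, zs, h0, h1, hmem, hcm⟩ := hwK
    rw [Finset.centerMass_eq_of_sum_1 _ _ h1] at hcm
    have hinner : ∑ i ∈ t, ws i * ⟪x, zs i⟫ = M - m := by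
      rw [← hxw, ← hcm, inner_sum]
      exact Finset.sum_congr rfl fun i _ => (real_inner_smul_right x (zs i) (ws i)).symm
    have hzero : ∀ i ∈ t, ws i * ((M - m) - ⟪x, zs i⟫) = 0 := by
      have hnn : ∀ i ∈ t, 0 ≤ ws i * ((M - m) - ⟪x, zs i⟫) := fun i hi =>
        mul_nonneg (h0 i hi)
          (by have := hKbound (zs i) (hsubK (hmem i hi)); linarith)
      have hsumz : ∑ i ∈ t, ws i * ((M - m) - ⟪x, zs i⟫) = 0 := by
        calc ∑ i ∈ t, ws i * ((M - m) - ⟪x, zs i⟫)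
            = ∑ i ∈ t, (ws i * (M - m) - ws i * ⟪x, zs i⟫) := by
              exact Finset.sum_congr rfl fun i _ => mul_sub _ _ _
          _ = (∑ i ∈ t, ws i) * (M - m) - ∑ i ∈ t, ws i * ⟪x, zs i⟫ := by
              rw [Finset.sum_sub_distrib, Finset.sum_mul]
          _ = 0 := by rw [h1, hinner, one_mul, sub_self]
      exact (Finset.sum_eq_zero_iff_of_nonneg hnn).1 hsumz
    have hval : ∀ i ∈ t, ws i ≠ 0 → ⟪x, zs i⟫ = M - m := by
      intro i hi hne
      rcases mul_eq_zero.1 (hzero i hi) with h | h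
      · exact absurd h hne
      · linarith
    -- w is in the convex hull of Amax - Amin
    have hwD : w ∈ convexHull ℝ (Amax - Amin) := by
      have hfilter : Finset.centerMass {i ∈ t | ws i ≠ 0} ws zs = w := by
        rw [Finset.centerMass_filter_ne_zero, Finset.centerMass_eq_of_sum_1 _ _ h1, hcm]
      rw [← hfilter]
      refine Finset.centerMass_mem_convexHull _ ?_ ?_ ?_
      · intro i hi; exact h0 i (Finset.mem_filter.1 hi).1
      · have : ∑ i ∈ {i ∈ t | ws i ≠ 0}, ws i = 1 := by
          rw [Finset.sum_filter_ne_zero, h1]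
        rw [this]; norm_num
      · intro i hi
        obtain ⟨hit, hne⟩ := Finset.mem_filter.1 hi
        obtain ⟨a, haE, b, hbE, hab⟩ := Set.mem_sub.1 (hmem i hit)
        have hvm : ⟪x, zs i⟫ = M - m := hval i hit hne
        have ha' : ⟪x, a⟫ ≤ M := hsup x a haE
        have hb' : m ≤ ⟪x, b⟫ := hinf x b hbE
        have hab' : ⟪x, a⟫ - ⟪x, b⟫ = M - m := by
          rw [← inner_sub_right, hab, hvm]
        have haM : ⟪x, a⟫ = M := by linarith
        have hbm : ⟪x, b⟫ = m := by linarith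
        rw [← hab]
        refine Set.sub_mem_sub ?_ ?_
        · exact ⟨haE, fun z hz => by rw [haM]; exact hsup x z hz⟩
        · exact ⟨hbE, fun z hz => by rw [hbm]; exact hinf x z hz⟩
    rw [convexHull_sub] at hwD
    obtain ⟨yp, hyp, ym, hym, hw'⟩ := Set.mem_sub.1 hwD
    exact ⟨yp, hyp, ym, hym, fun v => by rw [hw', hw v]⟩
  · rintro ⟨yp, hyp, ym, hym, hφ⟩
    have hxp : ⟪x, yp⟫ = M := by
      have : yp ∈ {u : V | ⟪x, u⟫ = M} :=
        convexHull_min (fun y hy => hAmaxVal y hy) (convex_hyperplane (hlin x) M) hyp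
      exact this
    have hxm : ⟪x, ym⟫ = m := by
      have : ym ∈ {u : V | ⟪x, u⟫ = m} :=
        convexHull_min (fun y hy => hAminVal y hy) (convex_hyperplane (hlin x) m) hym
      exact this
    have hboundp : ∀ v : V, ⟪v, yp⟫ ≤ sSup ((fun y => ⟪v, y⟫) '' E) := by
      intro v
      have : yp ∈ {u : V | ⟪v, u⟫ ≤ sSup ((fun y => ⟪v, y⟫) '' E)} :=
        convexHull_min (fun y hy => hsup v y hy.1) (convex_halfSpace_le (hlin v) _) hyp
      exact this
    have hboundm : ∀ v : V, sInf ((fun y => ⟪v, y⟫) '' E) ≤ ⟪v, ym⟫ := by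
      intro v
      have : ym ∈ {u : V | sInf ((fun y => ⟪v, y⟫) '' E) ≤ ⟪v, u⟫} :=
        convexHull_min (fun y hy => hinf v y hy.1) (convex_halfSpace_ge (hlin v) _) hym
      exact this
    constructor
    · intro v
      rw [hφ v, hHofer v, inner_sub_left, real_inner_comm v yp, real_inner_comm v ym]
      have h1 := hboundp v
      have h2 := hboundm v
      linarith
    · rw [hφ x, hHofer x, inner_sub_left, real_inner_comm x yp, real_inner_comm x ym,
        hxp, hxm]
end

section
/- Let B ⊆ V be a convex body containing 0 in its interior in a finite-dimensional inner product space, with gauge function g_B. For nonzero x ∈ V, the subdifferential satisfies ∂g_B(x) = F_x(B°), the exposed face of the polar body B° defined by x, i.e. ∂g_B(x) = {y ∈ B° : ⟨y,x⟩ = h_{B°}(x)}. -/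
open scoped RealInnerProductSpace

/-- The polar of a set: `A° = {x | ⟪x, y⟫ ≤ 1 for all y ∈ A}`. -/
def polarSet {V : Type*} [NormedAddCommGroup V] [InnerProductSpace ℝ V]
    (A : Set V) : Set V :=
  {x | ∀ y ∈ A, ⟪x, y⟫ ≤ 1}

/-- The subdifferential of a convex function `f` at `x₀`:
`∂f(x₀) = {y | f z - f x₀ ≥ ⟪z - x₀, y⟫ for all z}`. -/
def subdiff {V : Type*} [NormedAddCommGroup V] [InnerProductSpace ℝ V]
    (f : V → ℝ) (x₀ : V) : Set V :=
  {y | ∀ z, ⟪z - x₀, y⟫ ≤ f z - f x₀}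

/-- For `c` in the polar of `B` and any `z`, `⟪c, z⟫ ≤ gauge B z`. -/
lemma inner_le_gauge_of_mem_polar
    {V : Type*} [NormedAddCommGroup V] [InnerProductSpace ℝ V]
    {B : Set V} (habs : Absorbent ℝ B) {c : V} (hc : c ∈ polarSet B) (z : V) :
    ⟪c, z⟫ ≤ gauge B z := by
  rw [gauge_def]
  refine le_csInf habs.gauge_set_nonempty ?_
  rintro t ⟨ht, b, hb, rfl⟩
  have h1 : ⟪c, b⟫ ≤ 1 := hc b hb
  have ht0 : (0 : ℝ) < t := ht
  calc ⟪c, t • b⟫ = t * ⟪c, b⟫ := real_inner_smul_right c b t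
    _ ≤ t * 1 := by nlinarith
    _ = t := mul_one t

/-- For a convex body `B` with `0` in its interior and nonzero `x`, the subdifferential of the
Minkowski gauge `g_B` at `x` is the exposed face of the polar body `B°` defined by `x`:
`∂g_B(x) = {y ∈ B° : ⟪y, x⟫ = h_{B°}(x)}`. -/
theorem subdiff_gauge_eq_exposed_face_polar
    {V : Type*} [NormedAddCommGroup V] [InnerProductSpace ℝ V] [FiniteDimensional ℝ V]
    (B : Set V) (hB : IsCompact B) (hconv : Convex ℝ B) (h0 : (0 : V) ∈ interior B)
    (x : V) (hx : x ≠ 0) :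
    subdiff (gauge B) x =
      {y ∈ polarSet B | ⟪y, x⟫ = sSup ((fun c => ⟪c, x⟫) '' polarSet B)} := by
  have habs : Absorbent ℝ B := absorbent_nhds_zero (mem_interior_iff_mem_nhds.1 h0)
  -- gauge B x > 0
  have hgpos : 0 < gauge B x := by
    obtain ⟨R, hR, hBR⟩ := hB.isBounded.subset_ball_lt 0 0
    have h1 : gauge (Metric.ball (0 : V) R) x ≤ gauge B x :=
      gauge_mono habs hBR x
    rw [gauge_ball hR.le] at h1
    have : 0 < ‖x‖ / R := div_pos (norm_pos_iff.2 hx) hR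
    linarith
  -- the normalized boundary point p
  set p : V := (gauge B x)⁻¹ • x with hp
  have hgp : gauge B p = 1 := by
    rw [hp, gauge_smul_of_nonneg (inv_nonneg.2 hgpos.le), smul_eq_mul,
      inv_mul_cancel₀ hgpos.ne']
  have hpnotin : p ∉ interior B := by
    intro h
    have := interior_subset_gauge_lt_one B h
    simp only [Set.mem_setOf_eq, hgp] at this
    exact lt_irrefl 1 this
  -- separation: a continuous linear functional
  obtain ⟨f, hf⟩ := geometric_hahn_banach_open_point (hconv.interior) isOpen_interior hpnotin
  have hfp : 0 < f p := by
    have := hf 0 h0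
    simpa using this
  -- f b ≤ f p for all b ∈ B
  have hfB : ∀ b ∈ B, f b ≤ f p := by
    intro b hb
    by_contra hlt
    push_neg at hlt
    have hfb : 0 < f b := lt_trans hfp hlt
    set ε : ℝ := (1 - f p / f b) / 2 with hε
    have hε0 : 0 < ε := by
      have : f p / f b < 1 := (div_lt_one hfb).2 hlt
      rw [hε]; linarith
    have hε1 : ε < 1 := by
      have : 0 < f p / f b := div_pos hfp hfb
      rw [hε]; linarith
    have hmem : ε • (0 : V) + (1 - ε) • b ∈ interior B :=
      hconv.combo_interior_self_mem_interior h0 hb hε0 (by linarith) (by ring)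
    have := hf _ hmem
    rw [map_add, map_smul, map_smul, map_zero, smul_zero, zero_add, smul_eq_mul] at this
    have hdiv : f p / f b < 1 - ε := by
      rw [hε]
      have : f p / f b < 1 := (div_lt_one hfb).2 hlt
      linarith
    rw [div_lt_iff₀ hfb] at hdiv
    linarith
  -- Riesz representation
  obtain ⟨v, hv⟩ : ∃ v : V, ∀ z, ⟪v, z⟫ = f z := by
    refine ⟨(InnerProductSpace.toDual ℝ V).symm f, fun z => ?_⟩
    simp [InnerProductSpace.toDual_symm_apply]
  -- the maximizer c₀ ∈ polar with ⟪c₀, x⟫ = gauge B x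
  set c₀ : V := (f p)⁻¹ • v with hc₀
  have hc₀pol : c₀ ∈ polarSet B := by
    intro b hb
    rw [hc₀, real_inner_smul_left, hv]
    rw [inv_mul_le_one₀ hfp]
    exact hfB b hb
  have hxp : x = gauge B x • p := by
    rw [hp, smul_smul, mul_inv_cancel₀ hgpos.ne', one_smul]
  have hfx : f x = gauge B x * f p := by
    nth_rewrite 1 [hxp]
    rw [map_smul, smul_eq_mul]
  have hc₀x : ⟪c₀, x⟫ = gauge B x := by
    rw [hc₀, real_inner_smul_left, hv, hfx]
    field_simp
  -- polarSet is nonempty and bounded image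
  have h0pol : (0 : V) ∈ polarSet B := by
    intro b _; simp
  have hub : ∀ r ∈ (fun c => ⟪c, x⟫) '' polarSet B, r ≤ gauge B x := by
    rintro r ⟨c, hc, rfl⟩
    exact inner_le_gauge_of_mem_polar habs hc x
  have hsSup : sSup ((fun c => ⟪c, x⟫) '' polarSet B) = gauge B x := by
    refine le_antisymm (csSup_le ⟨⟪(0:V), x⟫, ⟨0, h0pol, rfl⟩⟩ hub) ?_
    rw [← hc₀x]
    exact le_csSup ⟨gauge B x, hub⟩ ⟨c₀, hc₀pol, rfl⟩
  ext y
  constructor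
  · intro hy
    have h1 : ⟪x, y⟫ ≤ gauge B x := by
      have := hy ((2:ℝ) • x)
      rw [gauge_smul_of_nonneg (by norm_num : (0:ℝ) ≤ 2)] at this
      have h2 : (2 : ℝ) • x - x = x := by
        rw [two_smul]; abel
      rw [h2, smul_eq_mul] at this
      linarith
    have h2 : gauge B x ≤ ⟪x, y⟫ := by
      have := hy 0
      rw [gauge_zero, zero_sub, zero_sub, inner_neg_left] at this
      linarith
    have hxy : ⟪x, y⟫ = gauge B x := le_antisymm h1 h2
    have hzy : ∀ z, ⟪z, y⟫ ≤ gauge B z := by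
      intro z
      have := hy z
      have hsplit : ⟪z - x, y⟫ = ⟪z, y⟫ - ⟪x, y⟫ := inner_sub_left z x y
      rw [hsplit, hxy] at this
      linarith
    refine ⟨?_, ?_⟩
    · intro b hb
      rw [real_inner_comm]
      exact le_trans (hzy b) (gauge_le_one_of_mem hb)
    · rw [hsSup, real_inner_comm]
      exact hxy
  · rintro ⟨hypol, hyx⟩
    rw [hsSup] at hyx
    intro z
    have h1 : ⟪z, y⟫ ≤ gauge B z := by
      rw [real_inner_comm]
      exact inner_le_gauge_of_mem_polar habs hypol z
    have hsplit : ⟪z - x, y⟫ = ⟪z, y⟫ - ⟪x, y⟫ := inner_sub_left z x y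
    rw [real_inner_comm] at hyx
    rw [hsplit, hyx]
    linarith
end

section
/- Let K be a compact semisimple Lie group with Lie algebra 𝔨 equipped with the negative Killing form inner product, and let ‖·‖ be an Ad-invariant norm on 𝔨. If φ ∈ 𝔨* is a norming functional of v ∈ 𝔨 (i.e. ‖φ‖ = 1 and φ(v) = ‖v‖), then φ([w,v]) = 0 for all w ∈ 𝔨, and consequently φ(e^{λ ad v} w) = φ(w) for all w ∈ 𝔨 and λ ∈ ℝ. -/
open scoped RealInnerProductSpace

/-- Gauss' lemma for Ad-invariant norms on a compact semisimple Lie algebra `𝔨`.  Here `𝔨` is a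
finite-dimensional real inner product space equipped with a Lie bracket (given as a bilinear
map `bk`, with `ad v = bk v`), the inner product is minus the Killing form
`(x, y) ↦ tr (ad x ∘ ad y)`, the Killing form is nondegenerate (semisimplicity, Cartan's
criterion), and the norm `N` is Ad-invariant, i.e. invariant under all `e^{ad w}`.  If `φ` is a
norming functional of `v` (i.e. `φ ≤ N` pointwise, so `φ` has dual norm `1`, and `φ v = N v`),
then `φ ⁅w, v⁆ = 0` for all `w`, and consequently `φ (e^{λ · ad v} w) = φ w` for all `w ∈ 𝔨`
and `λ ∈ ℝ`. -/
theorem norming_functional_vanishes_on_bracket_and_exp_invariant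
    {𝔨 : Type*} [NormedAddCommGroup 𝔨] [InnerProductSpace ℝ 𝔨] [FiniteDimensional ℝ 𝔨]
    (bk : 𝔨 →ₗ[ℝ] 𝔨 →ₗ[ℝ] 𝔨)
    (hanti : ∀ x y, bk x y = - bk y x)
    (hjacobi : ∀ x y z, bk x (bk y z) = bk (bk x y) z + bk y (bk x z))
    (hK : ∀ x y : 𝔨, ⟪x, y⟫ = - LinearMap.trace ℝ 𝔨 (bk x ∘ₗ bk y))
    (hss : ∀ x : 𝔨, (∀ y, LinearMap.trace ℝ 𝔨 (bk x ∘ₗ bk y) = 0) → x = 0)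
    (N : 𝔨 → ℝ)
    (hN0 : ∀ x, N x = 0 ↔ x = 0)
    (hNsmul : ∀ (c : ℝ) (x : 𝔨), N (c • x) = |c| * N x)
    (hNtri : ∀ x y, N (x + y) ≤ N x + N y)
    (hNinv : ∀ w x : 𝔨,
      N (NormedSpace.exp (LinearMap.toContinuousLinearMap (bk w)) x) = N x)
    (v : 𝔨) (φ : 𝔨 →ₗ[ℝ] ℝ)
    (hφ1 : ∀ x, φ x ≤ N x) (hφ2 : φ v = N v) :
    (∀ w : 𝔨, φ (bk w v) = 0) ∧
    (∀ (w : 𝔨) (t : ℝ),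
      φ (NormedSpace.exp (t • LinearMap.toContinuousLinearMap (bk v)) w) = φ w) := by
    -- Part 1
  have part1 : ∀ w : 𝔨, φ (bk w v) = 0 := by
    intro w
    set A := LinearMap.toContinuousLinearMap (bk w) with hA
    have hsmul : ∀ t : ℝ, t • A = LinearMap.toContinuousLinearMap (bk (t • w)) := by
      intro t; ext x; simp [hA]
    have hle : ∀ t : ℝ, φ (NormedSpace.exp (t • A) v) ≤ φ (NormedSpace.exp ((0:ℝ) • A) v) := by
      intro t
      have h0 : (0:ℝ) • A = 0 := zero_smul _ _
      rw [h0, NormedSpace.exp_zero]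
      calc φ (NormedSpace.exp (t • A) v) ≤ N (NormedSpace.exp (t • A) v) := hφ1 _
        _ = N v := by rw [hsmul t]; exact hNinv (t • w) v
        _ = φ v := hφ2.symm
        _ = φ ((1 : 𝔨 →L[ℝ] 𝔨) v) := by simp
    have hmax : IsLocalMax (fun t : ℝ => φ (NormedSpace.exp (t • A) v)) 0 :=
      Filter.Eventually.of_forall hle
    have hd : HasDerivAt (fun t : ℝ => φ (NormedSpace.exp (t • A) v))
        (φ ((NormedSpace.exp ((0:ℝ) • A) * A) v)) 0 := by
      have h1 : HasDerivAt (fun t : ℝ => NormedSpace.exp (t • A))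
          (NormedSpace.exp ((0:ℝ) • A) * A) 0 := hasDerivAt_exp_smul_const A (0:ℝ)
      have h2 := h1.clm_apply (hasDerivAt_const (0:ℝ) v)
      simp only [add_zero, map_zero] at h2
      exact ((LinearMap.toContinuousLinearMap φ).hasFDerivAt.comp_hasDerivAt 0 h2)
    have := hmax.deriv_eq_zero
    rw [hd.deriv] at this
    simpa [hA] using this
  refine ⟨part1, ?_⟩
  -- Part 2
  intro w t
  set B := LinearMap.toContinuousLinearMap (bk v) with hB
  have hvan : ∀ u : 𝔨, φ (bk v u) = 0 := by
    intro u
    rw [hanti v u, map_neg, part1 u, neg_zero]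
  have hd : ∀ s : ℝ, HasDerivAt (fun s : ℝ => φ (NormedSpace.exp (s • B) w)) 0 s := by
    intro s
    have h1 : HasDerivAt (fun s : ℝ => NormedSpace.exp (s • B))
        (B * NormedSpace.exp (s • B)) s := hasDerivAt_exp_smul_const' B s
    have h2 := h1.clm_apply (hasDerivAt_const s w)
    simp only [add_zero, map_zero] at h2
    have h3 := (LinearMap.toContinuousLinearMap φ).hasFDerivAt.comp_hasDerivAt s h2
    have heq : φ (B (NormedSpace.exp (s • B) w)) = 0 := hvan _
    simpa [Function.comp_def, heq] using h3
  have hconst : ∀ s : ℝ, φ (NormedSpace.exp (s • B) w) = φ (NormedSpace.exp ((0:ℝ) • B) w) := by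
    intro s
    exact is_const_of_deriv_eq_zero (fun x => (hd x).differentiableAt)
      (fun x => (hd x).deriv) s 0
  rw [hconst t, zero_smul, NormedSpace.exp_zero]
  simp
end

section
/- Let 𝔨 be a compact semisimple Lie algebra with negative-Killing-form inner product ⟨·,·⟩. If φ = ⟨·, a⟩ is a norming functional of z ∈ 𝔨 for an Ad-invariant norm, then [z, a] = 0. -/
open scoped RealInnerProductSpace

/-- On a compact semisimple Lie algebra `𝔨` (a finite-dimensional real inner product space
with Lie bracket `bk`, inner product minus the Killing form `(x,y) ↦ tr (ad x ∘ ad y)`,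
nondegenerate Killing form), if `φ = ⟪·, a⟫` is a norming functional of `z` for an Ad-invariant
norm `N` (invariant under all `e^{ad w}`), then `⁅z, a⁆ = 0`. -/
theorem norming_functional_commutes
    {𝔨 : Type*} [NormedAddCommGroup 𝔨] [InnerProductSpace ℝ 𝔨] [FiniteDimensional ℝ 𝔨]
    (bk : 𝔨 →ₗ[ℝ] 𝔨 →ₗ[ℝ] 𝔨)
    (hanti : ∀ x y, bk x y = - bk y x)
    (hjacobi : ∀ x y z, bk x (bk y z) = bk (bk x y) z + bk y (bk x z))
    (hK : ∀ x y : 𝔨, ⟪x, y⟫ = - LinearMap.trace ℝ 𝔨 (bk x ∘ₗ bk y))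
    (hss : ∀ x : 𝔨, (∀ y, LinearMap.trace ℝ 𝔨 (bk x ∘ₗ bk y) = 0) → x = 0)
    (N : 𝔨 → ℝ)
    (hN0 : ∀ x, N x = 0 ↔ x = 0)
    (hNsmul : ∀ (c : ℝ) (x : 𝔨), N (c • x) = |c| * N x)
    (hNtri : ∀ x y, N (x + y) ≤ N x + N y)
    (hNinv : ∀ w x : 𝔨,
      N (NormedSpace.exp (LinearMap.toContinuousLinearMap (bk w)) x) = N x)
    (z a : 𝔨)
    (hφ1 : ∀ x, ⟪x, a⟫ ≤ N x) (hφ2 : ⟪z, a⟫ = N z) :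
    bk z a = 0 := by
  classical
  -- ad is a derivation: bk (bk v x) = [bk v, bk x]
  have hcomp : ∀ v x : 𝔨, bk (bk v x) = bk v ∘ₗ bk x - bk x ∘ₗ bk v := by
    intro v x
    ext w
    simp only [LinearMap.sub_apply, LinearMap.comp_apply]
    rw [eq_sub_iff_add_eq]
    exact (hjacobi v x w).symm
  -- skew-adjointness of ad v w.r.t. the inner product
  have hskew : ∀ v x y : 𝔨, ⟪bk v x, y⟫ = - ⟪x, bk v y⟫ := by
    intro v x y
    set A := bk v
    set B := bk x
    set C := bk y
    have key : LinearMap.trace ℝ 𝔨 (bk (bk v x) ∘ₗ bk y)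
        + LinearMap.trace ℝ 𝔨 (bk x ∘ₗ bk (bk v y)) = 0 := by
      rw [hcomp v x, hcomp v y]
      simp only [← Module.End.mul_eq_comp, sub_mul, mul_sub, map_sub]
      have h1 : LinearMap.trace ℝ 𝔨 (A * B * C) = LinearMap.trace ℝ 𝔨 (B * (C * A)) := by
        rw [mul_assoc, LinearMap.trace_mul_comm, mul_assoc]
      have h2 : LinearMap.trace ℝ 𝔨 (B * A * C) = LinearMap.trace ℝ 𝔨 (B * (A * C)) := by
        rw [mul_assoc]
      linarith
    rw [hK, hK]
    linarith
  -- Gauss' lemma: the norming functional kills the tangent directions bk v z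
  have gauss : ∀ v : 𝔨, ⟪bk v z, a⟫ = 0 := by
    intro v
    set A := LinearMap.toContinuousLinearMap (bk v) with hA
    set f : ℝ → ℝ := fun t => ⟪(NormedSpace.exp (t • A)) z, a⟫ with hf
    have hf0 : f 0 = N z := by
      simp only [hf, zero_smul, NormedSpace.exp_zero, ContinuousLinearMap.one_apply]
      exact hφ2
    have hmax : IsLocalMax f 0 := by
      apply Filter.Eventually.of_forall
      intro t
      rw [hf0]
      have hsm : LinearMap.toContinuousLinearMap (bk (t • v)) = t • A := by
        rw [map_smul, map_smul]
      calc f t ≤ N ((NormedSpace.exp (t • A)) z) := hφ1 _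
        _ = N z := by rw [← hsm]; exact hNinv (t • v) z
    -- derivative of f at 0
    have hd1 : HasDerivAt (fun t : ℝ => (NormedSpace.exp (t • A)) z)
        ((NormedSpace.exp ((0:ℝ) • A) * A) z + (NormedSpace.exp ((0:ℝ) • A)) 0) 0 :=
      (hasDerivAt_exp_smul_const A (0 : ℝ)).clm_apply (hasDerivAt_const 0 z)
    have hd1' : HasDerivAt (fun t : ℝ => (NormedSpace.exp (t • A)) z) (bk v z) 0 := by
      convert hd1 using 1
      simp [A]
    have hd : HasDerivAt f (⟪(NormedSpace.exp ((0:ℝ) • A)) z, (0:𝔨)⟫ + ⟪bk v z, a⟫) 0 :=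
      hd1'.inner ℝ (hasDerivAt_const 0 a)
    have := hmax.hasDerivAt_eq_zero hd
    simpa using this
  -- transfer via skew-adjointness
  have h0 : ∀ v : 𝔨, ⟪v, bk z a⟫ = 0 := by
    intro v
    have h1 := gauss v
    rw [hanti v z, inner_neg_left, hskew z v a] at h1
    linarith
  have := h0 (bk z a)
  exact inner_self_eq_zero.mp this
end

section
/- Let K be a compact connected semisimple Lie group with an Ad-invariant norm ‖·‖ on 𝔨 inducing the bi-invariant length metric. For v, w ∈ 𝔨, dist(e^v, e^w) ≤ ‖w − v‖. -/
open scoped BigOperators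

/-- The Finsler length of the (C¹) path `γ` in `A`, measured with the norm `N` applied to the
left logarithmic derivative `γ⁻¹ γ'`. -/
noncomputable def pathLength {A : Type*} [NormedRing A] [NormedAlgebra ℝ A]
    (N : A → ℝ) (γ : ℝ → A) : ℝ :=
  ∫ t in (0:ℝ)..1, N (Ring.inverse (γ t) * deriv γ t)

/-- The bi-invariant Finsler distance on a subset `K ⊆ A`: the infimum of lengths of C¹ paths
in `K` joining the two points. -/
noncomputable def finslerDist {A : Type*} [NormedRing A] [NormedAlgebra ℝ A]
    (K : Set A) (N : A → ℝ) (a b : A) : ℝ :=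
  sInf {L | ∃ γ : ℝ → A, ContDiff ℝ 1 γ ∧ (∀ t ∈ Set.Icc (0:ℝ) 1, γ t ∈ K) ∧
    γ 0 = a ∧ γ 1 = b ∧ L = pathLength N γ}

attribute [local instance 100] LieRing.ofAssociativeRing

/-- Exponential metric decreasing property: on a compact connected (semisimple, linear) Lie
group `K` (realized as a compact connected subgroup of the units of a Banach algebra `A`, with
Lie algebra the Lie subalgebra `𝔨`, exponential map `NormedSpace.exp`), equipped with the
bi-invariant Finsler length metric induced by an `Ad`-invariant norm `N` on `𝔨`, one has
`dist (e^v, e^w) ≤ ‖w - v‖` for all `v, w ∈ 𝔨`. -/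
theorem dist_exp_exp_le
    {A : Type*} [NormedRing A] [NormedAlgebra ℝ A] [CompleteSpace A]
    (K : Subgroup Aˣ) (𝔨 : LieSubalgebra ℝ A) [LieAlgebra.IsSemisimple ℝ 𝔨]
    (hKcomp : IsCompact ((fun u : Aˣ => (u : A)) '' (K : Set Aˣ)))
    (hKconn : IsConnected ((fun u : Aˣ => (u : A)) '' (K : Set Aˣ)))
    (hexp : ∀ v ∈ 𝔨, NormedSpace.exp v ∈ (fun u : Aˣ => (u : A)) '' (K : Set Aˣ))
    (N : A → ℝ)
    (hN0 : ∀ x, 0 ≤ N x)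
    (hNdef : ∀ x, N x = 0 ↔ x = 0)
    (hNsmul : ∀ (c : ℝ) (x : A), N (c • x) = |c| * N x)
    (hNtri : ∀ x y, N (x + y) ≤ N x + N y)
    (hNinv : ∀ u ∈ K, ∀ x : A, N ((u : A) * x * ((u⁻¹ : Aˣ) : A)) = N x)
    (v w : A) (hv : v ∈ 𝔨) (hw : w ∈ 𝔨) :
    finslerDist ((fun u : Aˣ => (u : A)) '' (K : Set Aˣ)) N
        (NormedSpace.exp v) (NormedSpace.exp w) ≤ N (w - v) := by
  classical
  letI : NormedAlgebra ℚ A := .restrictScalars ℚ ℝ A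
  set e : A → A := NormedSpace.exp with he
  -- the path `γ t = e^{t w} e^{(1-t) v}`
  set γ : ℝ → A := fun t => e (t • w) * e ((1 - t) • v) with hγ
  have hmulinv : ∀ x : A, e (-x) * e x = 1 := fun x => by
    rw [he, ← NormedSpace.exp_add_of_commute (Commute.neg_left (Commute.refl x)),
      neg_add_cancel, NormedSpace.exp_zero]
  have hmulinv' : ∀ x : A, e x * e (-x) = 1 := fun x => by
    rw [he, ← NormedSpace.exp_add_of_commute (Commute.neg_right (Commute.refl x)),
      add_neg_cancel, NormedSpace.exp_zero]
  -- units corresponding to exponentials of elements of 𝔨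
  have hunit : ∀ x ∈ 𝔨, ∃ u : Aˣ, u ∈ K ∧ (u : A) = e x ∧ ((u⁻¹ : Aˣ) : A) = e (-x) := by
    intro x hx
    obtain ⟨u, huK, hu'⟩ := hexp x hx
    have hu : (u : A) = e x := hu'
    refine ⟨u, huK, hu, ?_⟩
    calc ((u⁻¹ : Aˣ) : A) = ((u⁻¹ : Aˣ) : A) * ((u : A) * e (-x)) := by
          rw [hu, hmulinv' x, mul_one]
      _ = e (-x) := by rw [← mul_assoc, Units.inv_mul, one_mul]
  -- the derivative of γ
  have hD : ∀ t : ℝ, HasDerivAt γ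
      (e (t • w) * w * e ((1 - t) • v) + e (t • w) * ((-1 : ℝ) • (e ((1 - t) • v) * v))) t := by
    intro t
    have h1 : HasDerivAt (fun t : ℝ => e (t • w)) (e (t • w) * w) t :=
      hasDerivAt_exp_smul_const w t
    have hs : HasDerivAt (fun t : ℝ => 1 - t) (-1) t := (hasDerivAt_id t).const_sub 1
    have h2 : HasDerivAt (fun t : ℝ => e ((1 - t) • v))
        ((-1 : ℝ) • (e ((1 - t) • v) * v)) t :=
      (hasDerivAt_exp_smul_const v (1 - t)).scomp t hs
    exact h1.mul h2
  -- the integrand is constant, equal to N (w - v)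
  have hconst : ∀ t : ℝ, N (Ring.inverse (γ t) * deriv γ t) = N (w - v) := by
    intro t
    obtain ⟨u₁, hu₁K, hu₁, hu₁'⟩ := hunit (t • w) (𝔨.smul_mem t hw)
    obtain ⟨u₂, hu₂K, hu₂, hu₂'⟩ := hunit ((1 - t) • v) (𝔨.smul_mem (1 - t) hv)
    have hginv : Ring.inverse (γ t) = e (-((1 - t) • v)) * e (-(t • w)) := by
      have hcoe : γ t = ((u₁ * u₂ : Aˣ) : A) := by
        rw [Units.val_mul, hu₁, hu₂]
      rw [hcoe, Ring.inverse_unit, mul_inv_rev, Units.val_mul, hu₁', hu₂']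
    have hderiv : deriv γ t
        = e (t • w) * w * e ((1 - t) • v) + e (t • w) * ((-1 : ℝ) • (e ((1 - t) • v) * v)) :=
      (hD t).deriv
    have hc : e ((1 - t) • v) * v = v * e ((1 - t) • v) :=
      ((Commute.refl v).smul_left (1 - t)).exp_left
    have hkey : Ring.inverse (γ t) * deriv γ t
        = e (-((1 - t) • v)) * (w - v) * e ((1 - t) • v) := by
      rw [hginv, hderiv]
      have h1 : e (-(t • w)) * e (t • w) = 1 := hmulinv _
      have h2 : e (-((1 - t) • v)) * e ((1 - t) • v) = 1 := hmulinv _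
      calc e (-((1 - t) • v)) * e (-(t • w)) *
            (e (t • w) * w * e ((1 - t) • v) + e (t • w) * ((-1 : ℝ) • (e ((1 - t) • v) * v)))
          = e (-((1 - t) • v)) * ((e (-(t • w)) * e (t • w)) * (w * e ((1 - t) • v)))
            + e (-((1 - t) • v)) * ((e (-(t • w)) * e (t • w)) * ((-1 : ℝ) • (e ((1 - t) • v) * v))) := by
            simp only [mul_add, mul_smul_comm, smul_mul_assoc]
            noncomm_ring
        _ = e (-((1 - t) • v)) * (w * e ((1 - t) • v))
            + e (-((1 - t) • v)) * ((-1 : ℝ) • (v * e ((1 - t) • v))) := by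
            rw [h1, hc, one_mul, one_mul]
        _ = e (-((1 - t) • v)) * (w - v) * e ((1 - t) • v) := by
            simp only [neg_one_smul, mul_neg, sub_mul, mul_sub]
            noncomm_ring
    rw [hkey]
    have := hNinv (u₂⁻¹) (inv_mem hu₂K) (w - v)
    rwa [inv_inv, hu₂, hu₂'] at this
  -- γ is C¹
  have hCD : ContDiff ℝ 1 γ := by
    have hexpC : ContDiff ℝ 1 (e : A → A) :=
      contDiff_iff_contDiffAt.2 fun x => (NormedSpace.exp_analytic x).contDiffAt
    exact (hexpC.comp (contDiff_id.smul contDiff_const)).mul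
      (hexpC.comp ((contDiff_const.sub contDiff_id).smul contDiff_const))
  -- γ stays in K
  have hmem : ∀ t ∈ Set.Icc (0:ℝ) 1, γ t ∈ (fun u : Aˣ => (u : A)) '' (K : Set Aˣ) := by
    intro t _
    obtain ⟨u₁, hu₁K, hu₁, -⟩ := hunit (t • w) (𝔨.smul_mem t hw)
    obtain ⟨u₂, hu₂K, hu₂, -⟩ := hunit ((1 - t) • v) (𝔨.smul_mem (1 - t) hv)
    exact ⟨u₁ * u₂, mul_mem hu₁K hu₂K, by simp [hγ, Units.val_mul, hu₁, hu₂]⟩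
  -- endpoints
  have h0 : γ 0 = NormedSpace.exp v := by
    simp [hγ, he, zero_smul, NormedSpace.exp_zero]
  have h1 : γ 1 = NormedSpace.exp w := by
    simp [hγ, he, zero_smul, NormedSpace.exp_zero]
  -- the length of γ is exactly N (w - v)
  have hlen : pathLength N γ = N (w - v) := by
    unfold pathLength
    simp only [hconst]
    rw [intervalIntegral.integral_const]
    simp
  -- conclude
  have hmemS : N (w - v) ∈ {L | ∃ γ : ℝ → A, ContDiff ℝ 1 γ ∧
      (∀ t ∈ Set.Icc (0:ℝ) 1, γ t ∈ (fun u : Aˣ => (u : A)) '' (K : Set Aˣ)) ∧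
      γ 0 = NormedSpace.exp v ∧ γ 1 = NormedSpace.exp w ∧ L = pathLength N γ} :=
    ⟨γ, hCD, hmem, h0, h1, hlen.symm⟩
  have hbdd : BddBelow {L | ∃ γ : ℝ → A, ContDiff ℝ 1 γ ∧
      (∀ t ∈ Set.Icc (0:ℝ) 1, γ t ∈ (fun u : Aˣ => (u : A)) '' (K : Set Aˣ)) ∧
      γ 0 = NormedSpace.exp v ∧ γ 1 = NormedSpace.exp w ∧ L = pathLength N γ} := by
    refine ⟨0, ?_⟩
    rintro L ⟨γ', -, -, -, -, rfl⟩
    exact intervalIntegral.integral_nonneg (by norm_num) fun t _ => hN0 _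
  exact csInf_le hbdd hmemS
end

section
/- Let 𝒲 be a finite reflection group acting isometrically on a finite-dimensional inner product space V, generated by reflections r_u in hyperplanes M_u = u^⊥ for u in a positive root system Φ, with fundamental chamber C = {x : ⟨x,u⟩ ≥ 0 for all u ∈ Φ}. Let P ⊆ V be a 𝒲-invariant convex polytope whose extreme points avoid all mirrors, i.e. ext(P) ∩ ⋃_{u∈Π} M_u = ∅ for a subset Π ⊆ Φ. If the hyperplane H_x = {z : ⟨x,z⟩ = 1} supports P at a point y ∈ ⋂_{u∈Π} M_u, then x ∈ ⋂_{u∈Π} M_u. -/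
open scoped RealInnerProductSpace

/-- The reflection in the mirror hyperplane `M_u = u^⊥` (for a unit vector `u`):
`r_u x = x - 2⟪x,u⟫ u`. -/
noncomputable def reflAlong {V : Type*} [NormedAddCommGroup V] [InnerProductSpace ℝ V]
    (u : V) (x : V) : V :=
  x - (2 * ⟪x, u⟫) • u

/-- Let `𝒲` be the finite reflection group generated by the reflections `r_u`, `u ∈ Φ`
(a finite positive root system of unit vectors), and let `P` be a `𝒲`-invariant convex
polytope (equivalently, invariant under each generating reflection).  Suppose `S ⊆ Φ` is such
that no extreme point of `P` lies on any mirror `M_u`, `u ∈ S`.  If the hyperplane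
`H_x = {z : ⟪x,z⟫ = 1}` supports `P` at a point `y ∈ ⋂_{u ∈ S} M_u`, then
`x ∈ ⋂_{u ∈ S} M_u`. -/
theorem support_point_on_mirrors_implies_functional_on_mirrors
    {V : Type*} [NormedAddCommGroup V] [InnerProductSpace ℝ V] [FiniteDimensional ℝ V]
    (Φ : Set V) (hΦfin : Φ.Finite) (hΦunit : ∀ u ∈ Φ, ‖u‖ = 1)
    (P : Set V) (s : Finset V) (hP : P = convexHull ℝ (s : Set V))
    (hPinv : ∀ u ∈ Φ, ∀ p ∈ P, reflAlong u p ∈ P)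
    (S : Set V) (hS : S ⊆ Φ)
    (hext : ∀ e ∈ Set.extremePoints ℝ P, ∀ u ∈ S, ⟪e, u⟫ ≠ 0)
    (x y : V) (hyP : y ∈ P) (hy1 : ⟪x, y⟫ = 1) (hsupp : ∀ p ∈ P, ⟪x, p⟫ ≤ 1)
    (hymirror : ∀ u ∈ S, ⟪y, u⟫ = 0) :
    ∀ u ∈ S, ⟪x, u⟫ = 0 := by
  intro u huS
  have huΦ := hS huS
  have hPconv : Convex ℝ P := hP ▸ convex_convexHull ℝ _
  have hPcompact : IsCompact P := hP ▸ s.finite_toSet.isCompact_convexHull (𝕜 := ℝ)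
  set E := Set.extremePoints ℝ P with hEdef
  have hEsub : E ⊆ (s : Set V) := by
    rw [hEdef, hP]; exact extremePoints_convexHull_subset
  have hEfin : E.Finite := s.finite_toSet.subset hEsub
  have hPE : P = convexHull ℝ E := by
    have h1 := closure_convexHull_extremePoints hPcompact hPconv
    rw [← h1, (hEfin.isClosed_convexHull (𝕜 := ℝ)).closure_eq]
  -- write y as convex combination of extreme points
  have hy' : y ∈ convexHull ℝ (hEfin.toFinset : Set V) := by
    rw [hEfin.coe_toFinset, ← hPE]; exact hyP
  rw [Finset.convexHull_eq, Set.mem_setOf_eq] at hy'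
  obtain ⟨w, hw0, hw1, hwy⟩ := hy'
  rw [Finset.centerMass_eq_of_sum_1 _ _ hw1] at hwy
  simp only [id_eq] at hwy
  set t := hEfin.toFinset with ht
  have hmemP : ∀ e ∈ t, e ∈ P := fun e het => by
    rw [hPE]; exact subset_convexHull ℝ E (hEfin.mem_toFinset.mp het)
  -- each extreme point with positive weight lies on the hyperplane H_x
  have hxe : ∀ e ∈ t, 0 < w e → ⟪x, e⟫ = 1 := by
    intro e het hwe
    by_contra hne
    have hle : ∀ f ∈ t, w f * ⟪x, f⟫ ≤ w f * 1 := fun f hft =>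
      mul_le_mul_of_nonneg_left (hsupp f (hmemP f hft)) (hw0 f hft)
    have hlt : w e * ⟪x, e⟫ < w e * 1 :=
      mul_lt_mul_of_pos_left (lt_of_le_of_ne (hsupp e (hmemP e het)) hne) hwe
    have hstrict : ∑ f ∈ t, w f * ⟪x, f⟫ < ∑ f ∈ t, w f * 1 :=
      Finset.sum_lt_sum hle ⟨e, het, hlt⟩
    have hsum : ∑ f ∈ t, w f * ⟪x, f⟫ = 1 := by
      rw [← hy1, ← hwy, inner_sum]
      exact Finset.sum_congr rfl fun f _ => by rw [real_inner_smul_right]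
    rw [hsum] at hstrict
    simp only [mul_one, hw1] at hstrict
    exact lt_irrefl 1 hstrict
  -- sign constraint from the reflection invariance
  have hsign : ∀ e ∈ t, 0 < w e → 0 ≤ ⟪e, u⟫ * ⟪x, u⟫ := by
    intro e het hwe
    have hre : reflAlong u e ∈ P := hPinv u huΦ e (hmemP e het)
    have h1 := hsupp _ hre
    rw [reflAlong, inner_sub_right, real_inner_smul_right, hxe e het hwe] at h1
    nlinarith [h1]
  -- ∑ w f * ⟪f,u⟫ = ⟪y,u⟫ = 0
  have hsum0 : ∑ f ∈ t, w f * ⟪f, u⟫ * ⟪x, u⟫ = 0 := by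
    have : ∑ f ∈ t, w f * ⟪f, u⟫ = 0 := by
      rw [← hymirror u huS, ← hwy, sum_inner]
      exact Finset.sum_congr rfl fun f _ => by rw [real_inner_smul_left]
    rw [← Finset.sum_mul, this, zero_mul]
  have hnonneg : ∀ f ∈ t, 0 ≤ w f * ⟪f, u⟫ * ⟪x, u⟫ := by
    intro f hft
    rcases lt_or_eq_of_le (hw0 f hft) with hpos | hzero
    · rw [mul_assoc]
      exact mul_nonneg (le_of_lt hpos) (hsign f hft hpos)
    · rw [← hzero, zero_mul, zero_mul]
  have hall0 := (Finset.sum_eq_zero_iff_of_nonneg hnonneg).mp hsum0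
  -- pick an extreme point with positive weight
  obtain ⟨e, het, hwe⟩ : ∃ e ∈ t, w e ≠ 0 := by
    apply Finset.exists_ne_zero_of_sum_ne_zero
    rw [hw1]; exact one_ne_zero
  have hwe' : 0 < w e := lt_of_le_of_ne (hw0 e het) (Ne.symm hwe)
  have heu : ⟪e, u⟫ ≠ 0 := hext e (hEfin.mem_toFinset.mp het) u huS
  have := hall0 e het
  rw [mul_assoc] at this
  rcases mul_eq_zero.mp this with h | h
  · exact absurd h hwe
  · rcases mul_eq_zero.mp h with h' | h'
    · exact absurd h' heu
    · exact h'
end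

section
/- Let 𝒲 be a finite reflection group acting on a finite-dimensional inner product space V with closed fundamental chamber C, and let P₁, ..., Pₙ be 𝒲-invariant convex polytopes. If all extreme points of P₁ are regular (have trivial 𝒲-stabilizer), then all extreme points of the Minkowski sum P₁ + ... + Pₙ are regular. -/
open scoped RealInnerProductSpace BigOperators

/-- Let `𝒲` be the finite reflection group generated by the reflections in the mirrors
`u^⊥`, `u ∈ Φ` (a finite set of unit vectors), realized as the subgroup `W` of linear
isometries generated by the hyperplane reflections, and let `P 1, …, P n` be `𝒲`-invariant
convex polytopes.  If all extreme points of one of the polytopes (`P j`) are regular (i.e.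
have trivial `𝒲`-stabilizer), then all extreme points of the Minkowski sum `P 1 + ⋯ + P n`
are regular. -/
theorem extremePoints_minkowski_sum_regular
    {V : Type*} [NormedAddCommGroup V] [InnerProductSpace ℝ V] [FiniteDimensional ℝ V]
    (Φ : Set V) (hΦfin : Φ.Finite) (hΦunit : ∀ u ∈ Φ, ‖u‖ = 1)
    (W : Subgroup (V ≃ₗᵢ[ℝ] V))
    (hW : W = Subgroup.closure
      {g | ∃ u ∈ Φ, g = Submodule.reflection (Submodule.span ℝ {u})ᗮ})
    (hWfin : (W : Set (V ≃ₗᵢ[ℝ] V)).Finite)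
    (n : ℕ) (P : Fin n → Set V)
    (hpoly : ∀ i, ∃ s : Finset V, P i = convexHull ℝ (s : Set V))
    (hPinv : ∀ i, ∀ g ∈ W, ∀ p ∈ P i, g p ∈ P i)
    (j : Fin n)
    (hreg : ∀ e ∈ Set.extremePoints ℝ (P j), ∀ g ∈ W, g e = e → g = 1) :
    ∀ z ∈ Set.extremePoints ℝ {v | ∃ f : Fin n → V, (∀ i, f i ∈ P i) ∧ v = ∑ i, f i},
      ∀ g ∈ W, g z = z → g = 1 := by
  set S : Set V := {v | ∃ f : Fin n → V, (∀ i, f i ∈ P i) ∧ v = ∑ i, f i} with hS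
  intro z hz g hg hgz
  obtain ⟨hzS, hzext⟩ := hz
  obtain ⟨f, hf, hsum⟩ := hzS
  have hjmem : j ∈ (Finset.univ : Finset (Fin n)) := Finset.mem_univ j
  set R : V := ∑ i ∈ Finset.univ.erase j, f i with hR
  have hzR : z = f j + R := by
    rw [hsum, hR, Finset.add_sum_erase _ f hjmem]
  -- membership of modified sums
  have hmem : ∀ a ∈ P j, a + R ∈ S := by
    intro a ha
    refine ⟨Function.update f j a, ?_, ?_⟩
    · intro i
      rcases eq_or_ne i j with rfl | h
      · simpa using ha
      · simpa [Function.update_of_ne h] using hf i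
    · rw [Finset.sum_update_of_mem hjmem, Finset.sdiff_singleton_eq_erase]
  -- key: if z lies between a+R and b+R with a,b ∈ P j, those endpoints are z
  have hz_of_seg : ∀ a ∈ P j, ∀ b ∈ P j, z ∈ openSegment ℝ (a + R) (b + R) →
      a = f j ∧ b = f j := by
    intro a ha b hb hseg
    obtain ⟨h1, h2⟩ : a + R = z ∧ b + R = z :=
      ⟨hzext (hmem a ha) (hmem b hb) hseg, hzext (hmem b hb) (hmem a ha) (by rwa [openSegment_symm])⟩
    constructor
    · have := h1.trans hzR
      exact add_right_cancel this
    · have := h2.trans hzR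
      exact add_right_cancel this
  -- f j is an extreme point of P j
  have hfj_ext : f j ∈ Set.extremePoints ℝ (P j) := by
    refine ⟨hf j, ?_⟩
    intro a ha b hb hseg
    have hseg' : z ∈ openSegment ℝ (a + R) (b + R) := by
      obtain ⟨s, t, hs, ht, hst, heq⟩ := hseg
      refine ⟨s, t, hs, ht, hst, ?_⟩
      rw [hzR, ← heq, smul_add, smul_add]
      have : s • R + t • R = R := by
        rw [← add_smul, hst, one_smul]
      linear_combination (norm := abel) this
    obtain ⟨h1, h2⟩ := hz_of_seg a ha b hb hseg'
    exact h1
  -- g fixes f j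
  have hgfix : g (f j) = f j := by
    set p : V := g (f j) + R with hp
    set q : V := f j + ∑ i ∈ Finset.univ.erase j, g (f i) with hq
    have hpS : p ∈ S := hmem _ (hPinv j g hg _ (hf j))
    have hqS : q ∈ S := by
      refine ⟨Function.update (fun i => g (f i)) j (f j), ?_, ?_⟩
      · intro i
        rcases eq_or_ne i j with rfl | h
        · simpa using hf i
        · simpa [Function.update_of_ne h] using hPinv i g hg _ (hf i)
      · rw [Finset.sum_update_of_mem hjmem, Finset.sdiff_singleton_eq_erase]
    have hpq : p + q = z + z := by
      have hgz' : (∑ i, g (f i)) = z := by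
        rw [← hgz, hsum, map_sum]
      have h1 : g (f j) + ∑ i ∈ Finset.univ.erase j, g (f i) = z := by
        rw [Finset.add_sum_erase _ (fun i => g (f i)) hjmem, hgz']
      rw [hp, hq]
      calc g (f j) + R + (f j + ∑ i ∈ Finset.univ.erase j, g (f i))
          = (f j + R) + (g (f j) + ∑ i ∈ Finset.univ.erase j, g (f i)) := by abel
        _ = z + z := by rw [← hzR, h1]
    have hpz : p = z := by
      rcases eq_or_ne p q with hpq' | hpq'
      · rw [← hpq'] at hpq
        have h2 : (2 : ℝ) • p = (2 : ℝ) • z := by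
          rw [two_smul, two_smul]; exact hpq
        exact smul_right_injective V two_ne_zero h2
      · have hseg : z ∈ openSegment ℝ p q := by
          have key : (1/2 : ℝ) • p + (1/2 : ℝ) • q = z := by
            rw [← smul_add, hpq, ← two_smul ℝ z, smul_smul]
            norm_num
          exact ⟨1/2, 1/2, by norm_num, by norm_num, by norm_num, key⟩
        exact (hzext hpS hqS hseg)
    have := hpz.trans hzR
    exact add_right_cancel this
  exact hreg (f j) hfj_ext g hg hgfix
end
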